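/- arXiv:1304.4827 — 3 statements merged into one kernel-verified Lean document; each statement's English description precedes it below -/
import Mathlib

section
/- For any three points x, y, z on the round 2-sphere of radius 1/2, the sum of the pairwise geodesic distances satisfies d(x,y) + d(y,z) + d(z,x) ≤ π. -/
open Real InnerProductGeometry

/-- Intrinsic (geodesic) distance on the round 2-sphere of radius `1/2` in `ℝ³`:
for `x, y` of norm `1/2`, `⟪x,y⟫ = (1/2)² cos θ` where `θ` is the angle between
them, and the geodesic distance is `(1/2) · θ`. -/
noncomputable def sphereHalfDist (x y : EuclideanSpace ℝ (Fin 3)) : ℝ :=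
  (1 / 2) * Real.arccos (4 * (inner ℝ x y : ℝ))

/-- Passing through the antipode `-y` turns the triangle inequality for angles into a bound
on the perimeter, since `angle x (-y) = π - angle x y`. -/
theorem InnerProductGeometry.angle_add_angle_add_angle_le_two_pi
    {V : Type*} [NormedAddCommGroup V] [InnerProductSpace ℝ V] (x y z : V) :
    angle x y + angle y z + angle z x ≤ 2 * π := by
  have h := angle_le_angle_add_angle x (-y) z
  rw [angle_neg_right, angle_neg_left, angle_comm x z] at h
  linarith

theorem sphereHalfDist_eq_half_angle {x y : EuclideanSpace ℝ (Fin 3)}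
    (hx : ‖x‖ = 1 / 2) (hy : ‖y‖ = 1 / 2) : sphereHalfDist x y = angle x y / 2 := by
  rw [sphereHalfDist, angle, hx, hy]
  ring_nf

/-- For any three points on the round 2-sphere of radius `1/2`, the pairwise intrinsic
distances sum to at most `π`. -/
theorem sum_dist_le_pi_sphere_half (x y z : EuclideanSpace ℝ (Fin 3))
    (hx : ‖x‖ = 1 / 2) (hy : ‖y‖ = 1 / 2) (hz : ‖z‖ = 1 / 2) :
    sphereHalfDist x y + sphereHalfDist y z + sphereHalfDist z x ≤ Real.pi := by
  rw [sphereHalfDist_eq_half_angle hx hy, sphereHalfDist_eq_half_angle hy hz,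
    sphereHalfDist_eq_half_angle hz hx]
  linarith [angle_add_angle_add_angle_le_two_pi x y z]
end

section
/- A finite abelian subgroup of U(2) that acts freely on the unit sphere S³ ⊂ ℂ² (i.e., no nontrivial element has 1 as an eigenvalue) is cyclic. -/
/-!
Commuting endomorphisms of a nonzero finite-dimensional space over an algebraically closed field
have a common eigenvector `v`: shrink an invariant subspace to the eigenspace of a member that is
not scalar on it, which commutativity keeps invariant. The eigenvalues on `v` form a character of
the group, and freeness of the action makes it injective, so the group embeds in `ℂˣ` and, being
finite, is cyclic.
-/

open Matrix

namespace Module.End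

variable {K V : Type*} [Field K] [AddCommGroup V] [Module K V]

theorem exists_mem_ne_zero_forall_apply_eq_smul_of_commute [IsAlgClosed K] [FiniteDimensional K V]
    {S : Set (End K V)} (hS : ∀ f ∈ S, ∀ g ∈ S, Commute f g) {W : Submodule K V}
    (hW : W ≠ ⊥) (hWS : ∀ f ∈ S, ∀ w ∈ W, f w ∈ W) :
    ∃ v ∈ W, v ≠ 0 ∧ ∀ f ∈ S, ∃ c : K, f v = c • v := by
  induction hn : finrank K W using Nat.strong_induction_on generalizing W with
  | _ n ih =>
  by_cases hscalar : ∀ f ∈ S, ∃ c : K, ∀ w ∈ W, f w = c • w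
  · obtain ⟨v, hvW, hv⟩ := Submodule.exists_mem_ne_zero_of_ne_bot hW
    exact ⟨v, hvW, hv, fun f hf => (hscalar f hf).imp fun c hc => hc v hvW⟩
  push Not at hscalar
  obtain ⟨f, hf, hf_nonscalar⟩ := hscalar
  have : Nontrivial W := Submodule.nontrivial_iff_ne_bot.mpr hW
  obtain ⟨μ, hμ⟩ := exists_eigenvalue (f.restrict (hWS f hf))
  obtain ⟨w, hw⟩ := hμ.exists_hasEigenvector
  set E := W ⊓ f.eigenspace μ
  have hE : E ≠ ⊥ := by
    refine Submodule.ne_bot_iff _ |>.mpr ⟨w, ⟨w.2, ?_⟩, by simpa using hw.2⟩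
    simpa [mem_eigenspace_iff] using congrArg Subtype.val hw.apply_eq_smul
  have hEW : E < W := by
    refine inf_le_left.lt_of_ne fun hEW => ?_
    obtain ⟨x, hxW, hx⟩ := hf_nonscalar μ
    exact hx (mem_eigenspace_iff.mp (hEW.ge hxW).2)
  have hES : ∀ g ∈ S, ∀ x ∈ E, g x ∈ E := by
    rintro g hg x ⟨hxW, hx⟩
    refine ⟨hWS g hg x hxW, mem_eigenspace_iff.mpr ?_⟩
    rw [← mul_apply, (hS f hf g hg).eq, mul_apply, mem_eigenspace_iff.mp hx, map_smul]
  obtain ⟨v, hvE, hv, hvS⟩ := ih _ (hn ▸ Submodule.finrank_lt_finrank_of_lt hEW) hE hES rfl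
  exact ⟨v, hvE.1, hv, hvS⟩

theorem exists_ne_zero_forall_apply_eq_smul_of_commute [IsAlgClosed K] [FiniteDimensional K V]
    [Nontrivial V] {S : Set (End K V)} (hS : ∀ f ∈ S, ∀ g ∈ S, Commute f g) :
    ∃ v ≠ (0 : V), ∀ f ∈ S, ∃ c : K, f v = c • v := by
  obtain ⟨v, -, hv, hvS⟩ := exists_mem_ne_zero_forall_apply_eq_smul_of_commute hS
    (W := ⊤) top_ne_bot fun _ _ _ _ => Submodule.mem_top
  exact ⟨v, hv, hvS⟩

theorem exists_monoidHom_forall_apply_eq_smul {G : Type*} [Monoid G] (ρ : G →* End K V) {v : V}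
    (hv : v ≠ 0) (h : ∀ g, ∃ c : K, ρ g v = c • v) :
    ∃ χ : G →* K, ∀ g, ρ g v = χ g • v := by
  choose c hc using h
  refine ⟨{ toFun := c, map_one' := ?_, map_mul' := fun a b => ?_ }, hc⟩ <;>
    apply smul_left_injective K hv <;> dsimp only
  · rw [← hc, map_one, one_apply, one_smul]
  · rw [← hc, map_mul, mul_apply, hc b, map_smul, hc a, smul_smul, mul_comm]

theorem isCyclic_of_commute_of_free [IsAlgClosed K] [FiniteDimensional K V] [Nontrivial V]
    {G : Type*} [Group G] [Finite G] (ρ : G →* End K V) (hcomm : ∀ a b, Commute (ρ a) (ρ b))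
    (hfree : ∀ g, g ≠ 1 → ∀ v, ρ g v = v → v = 0) : IsCyclic G := by
  obtain ⟨v, hv, hvρ⟩ := exists_ne_zero_forall_apply_eq_smul_of_commute
    (S := Set.range ρ) (by rintro _ ⟨a, rfl⟩ _ ⟨b, rfl⟩; exact hcomm a b)
  obtain ⟨χ, hχ⟩ := exists_monoidHom_forall_apply_eq_smul ρ hv fun g => hvρ _ ⟨g, rfl⟩
  refine isCyclic_of_injective_ringHom χ <| (injective_iff_map_eq_one χ).mpr fun g hg => ?_
  by_contra hg1
  exact hv <| hfree g hg1 v <| by rw [hχ, hg, one_smul]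

end Module.End

/-- A finite abelian subgroup of `U(2)` acting freely on the unit sphere `S³ ⊂ ℂ²`
(i.e. no nontrivial element has `1` as an eigenvalue) is cyclic. -/
theorem isCyclic_of_abelian_free_subgroup_U2
    (H : Subgroup (Matrix.unitaryGroup (Fin 2) ℂ)) [Finite H]
    (habel : ∀ a ∈ H, ∀ b ∈ H, a * b = b * a)
    (hfree : ∀ g ∈ H, g ≠ 1 → ∀ v : Fin 2 → ℂ, (g : Matrix (Fin 2) (Fin 2) ℂ) *ᵥ v = v → v = 0) :
    IsCyclic H := by
  let ρ : H →* Module.End ℂ (Fin 2 → ℂ) :=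
    Matrix.toLinAlgEquiv'.toMonoidHom.comp ((unitaryGroup (Fin 2) ℂ).subtype.comp H.subtype)
  exact Module.End.isCyclic_of_commute_of_free ρ
    (fun a b => (show Commute a b from Subtype.ext (habel _ a.2 _ b.2)).map ρ)
    fun g hg => hfree g g.2 (by exact_mod_cast hg)
end

section
/- The binary icosahedral group is perfect, i.e., it equals its own commutator subgroup; equivalently its abelianization is trivial. -/
theorem Abelianization.subsingleton_of_commutator_eq_top {G : Type*} [Group G]
    (h : commutator G = ⊤) : Subsingleton (Abelianization G) := by
  rw [Abelianization, h]
  exact QuotientGroup.subsingleton_quotient_top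

/-- The binary icosahedral group, identified with `SL(2,5)`, is perfect: it equals its own
commutator subgroup (equivalently, its abelianization is trivial). -/
theorem binaryIcosahedral_perfect :
    commutator (Matrix.SpecialLinearGroup (Fin 2) (ZMod 5)) = ⊤ ∧
    Subsingleton (Abelianization (Matrix.SpecialLinearGroup (Fin 2) (ZMod 5))) := by
  -- Decided before the `Fact` hypothesis exists: a field instance built from it blocks `decide`.
  have htwo : (2 : ZMod 5) ≠ 0 := by decide
  have htwo_sq : (2 : ZMod 5) ^ 2 ≠ 1 := by decide
  have : Fact (Nat.Prime 5) := ⟨Nat.prime_five⟩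
  -- Over a field with some `a ≠ 0`, `a² ≠ 1`, conjugation by `diag(a, a⁻¹)` scales each
  -- transvection by `a² - 1`, so every transvection is a commutator; transvections generate SL₂.
  have hperfect : commutator (Matrix.SpecialLinearGroup (Fin 2) (ZMod 5)) = ⊤ :=
    Matrix.SL2.commutator_eq_top htwo htwo_sq
  exact ⟨hperfect, Abelianization.subsingleton_of_commutator_eq_top hperfect⟩
end
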